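/- Let m ≥ 1 and let r be a binary sequence with period dividing 3·2^m such that r(i) + r(i + 2^m) + r(i + 2·2^m) = 0 for all i ≥ 0. If (E² + E + 1)^{2^{m−1}} r = 0 (the all-zero sequence), then r has period dividing 3·2^{m−1} and satisfies r(i) + r(i + 2^{m−1}) + r(i + 2·2^{m−1}) = 0 for all i ≥ 0. -/
import Mathlib


open Polynomial

noncomputable def polyApp (f : Polynomial (ZMod 2)) (s : ℕ → ZMod 2) : ℕ → ZMod 2 :=
  fun i => f.sum fun j c => c * s (i + j)

lemma polyApp_add (f g : Polynomial (ZMod 2)) (s : ℕ → ZMod 2) (i : ℕ) :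
    polyApp (f + g) s i = polyApp f s i + polyApp g s i := by
  unfold polyApp
  exact Polynomial.sum_add_index f g _ (fun n => by simp) (fun n a b => by ring)

lemma polyApp_X_pow (n : ℕ) (s : ℕ → ZMod 2) (i : ℕ) :
    polyApp (X ^ n) s i = s (i + n) := by
  unfold polyApp
  rw [← Polynomial.monomial_one_right_eq_X_pow]
  simp [Polynomial.sum_monomial_index]

lemma polyApp_one (s : ℕ → ZMod 2) (i : ℕ) : polyApp 1 s i = s i := by
  have := polyApp_X_pow 0 s i
  simpa using this

lemma pow_identity (k : ℕ) :
    ((X : Polynomial (ZMod 2)) ^ 2 + X + 1) ^ (2 ^ k)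
      = X ^ (2 ^ (k + 1)) + X ^ (2 ^ k) + 1 := by
  induction k with
  | zero => simp
  | succ k ih =>
    have h2 : (2 : ℕ) ^ (k + 1) = 2 ^ k * 2 := by rw [pow_succ]
    rw [h2, pow_mul, ih]
    have : ∀ a b c : Polynomial (ZMod 2), (a + b + c) ^ 2 = a ^ 2 + b ^ 2 + c ^ 2 := by
      intro a b c
      rw [add_pow_char, add_pow_char]
    rw [this, ← pow_mul, ← pow_mul, one_pow, pow_succ 2 (k + 1), pow_succ 2 k]

theorem reduction_step_period_three_zero_case
    (m : ℕ) (hm : 1 ≤ m)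
    (r : ℕ → ZMod 2) (hper : ∀ i, r (i + 3 * 2 ^ m) = r i)
    (hsum : ∀ i, r i + r (i + 2 ^ m) + r (i + 2 * 2 ^ m) = 0)
    (hzero : polyApp ((X ^ 2 + X + 1) ^ (2 ^ (m - 1))) r = 0) :
    (∀ i, r (i + 3 * 2 ^ (m - 1)) = r i) ∧
    (∀ i, r i + r (i + 2 ^ (m - 1)) + r (i + 2 * 2 ^ (m - 1)) = 0) := by
  have hm1 : m - 1 + 1 = m := by omega
  have key : ∀ i, r (i + 2 ^ m) + r (i + 2 ^ (m - 1)) + r i = 0 := by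
    intro i
    have h := congrFun hzero i
    rw [pow_identity, polyApp_add, polyApp_add, polyApp_X_pow, polyApp_X_pow,
      polyApp_one, hm1] at h
    exact h
  have h2 : 2 * 2 ^ (m - 1) = 2 ^ m := by
    conv_rhs => rw [← hm1]
    rw [pow_succ]; exact mul_comm _ _
  have char2 : ∀ a : ZMod 2, a + a = 0 := by decide
  constructor
  · intro i
    have h3 : i + 3 * 2 ^ (m - 1) = (i + 2 ^ (m - 1)) + 2 ^ m := by omega
    have k1 := key (i + 2 ^ (m - 1))
    have k2 := key i
    have e1 : i + 2 ^ (m - 1) + 2 ^ (m - 1) = i + 2 ^ m := by omega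
    rw [e1] at k1
    rw [h3]
    -- k1 : r (i + 2^(m-1) + 2^m) + r (i + 2^m) + r (i + 2^(m-1)) = 0
    -- k2 : r (i + 2^m) + r (i + 2^(m-1)) + r i = 0
    have : r (i + 2 ^ (m - 1) + 2 ^ m) = r i := by
      have e2 : ∀ a b c : ZMod 2, a + b + c = 0 → a = b + c := by decide
      rw [e2 _ _ _ k1, e2 _ _ _ k2]
      have e3 : ∀ a b : ZMod 2, a + b + a = b := by decide
      exact e3 _ _
    exact this
  · intro i
    rw [h2]
    have := key i
    linear_combination this
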